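/- Let π : ℚ^n → ℚ^d be a surjective linear map and P ⊆ ℚ^n a nonempty polyhedron. Then π(rec(P)) = rec(π(P)). -/
import Mathlib


open Finset Set Pointwise

noncomputable section

variable {ι : Type*}

/-- The standard pairing between `ι → ℚ` and itself (functionals as vectors). -/
def dotp [Fintype ι] (w x : ι → ℚ) : ℚ := ∑ i, w i * x i

/-- The face of `P` on which the linear functional `w` attains its minimum. -/
def faceOf [Fintype ι] (P : Set (ι → ℚ)) (w : ι → ℚ) : Set (ι → ℚ) :=
  {x | x ∈ P ∧ ∀ y ∈ P, dotp w x ≤ dotp w y}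

/-- `F` is a (nonempty) face of `P`. -/
def IsFaceOf [Fintype ι] (P F : Set (ι → ℚ)) : Prop :=
  F.Nonempty ∧ ∃ w, F = faceOf P w

/-- The (closed) inner normal cone of a face `F` of `P`: all functionals minimized on `F`. -/
def normalCone [Fintype ι] (P F : Set (ι → ℚ)) : Set (ι → ℚ) :=
  {w | F ⊆ faceOf P w}

/-- The recession cone of `P`. -/
def recCone (P : Set (ι → ℚ)) : Set (ι → ℚ) := {u | ∀ x ∈ P, x + u ∈ P}

/-- The dual cone of `C`. -/
def dualCone [Fintype ι] (C : Set (ι → ℚ)) : Set (ι → ℚ) := {w | ∀ x ∈ C, 0 ≤ dotp w x}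

/-- The relative interior of a convex set `S`. -/
def relint (S : Set (ι → ℚ)) : Set (ι → ℚ) :=
  {x | x ∈ S ∧ ∀ y ∈ S, ∃ ε : ℚ, 0 < ε ∧ x + ε • (x - y) ∈ S}

/-- `P` is a polyhedron `{x | A x ≥ b}`. -/
def IsPolyhedron [Fintype ι] (P : Set (ι → ℚ)) : Prop :=
  ∃ (r : ℕ) (A : Fin r → ι → ℚ) (b : Fin r → ℚ), P = {x | ∀ i, b i ≤ dotp (A i) x}

/-- `C` is a polyhedral cone `{x | A x ≥ 0}`. -/
def IsPolyhedralCone [Fintype ι] (C : Set (ι → ℚ)) : Prop :=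
  ∃ (r : ℕ) (A : Fin r → ι → ℚ), C = {x | ∀ i, 0 ≤ dotp (A i) x}

/-- Two polyhedra are normally equivalent: they have the same inner normal fan,
i.e. the same support and the same partition of functionals by faces. -/
def normallyEquiv [Fintype ι] (P P' : Set (ι → ℚ)) : Prop :=
  (∀ w, (faceOf P w).Nonempty ↔ (faceOf P' w).Nonempty) ∧
  ∀ w w', faceOf P w = faceOf P w' ↔ faceOf P' w = faceOf P' w'

/-- `F` is the smallest face of `P` containing the set `S`. -/
def IsSmallestFaceContaining [Fintype ι] (P S F : Set (ι → ℚ)) : Prop :=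
  IsFaceOf P F ∧ S ⊆ F ∧ ∀ G, IsFaceOf P G → S ⊆ G → F ⊆ G

/-- The homogenization `P̃` of `P`: the closure in `(ι ⊕ Unit) → ℚ` of the cone over `P`
placed at height `1`. -/
def tildeSet (P : Set (ι → ℚ)) : Set ((ι ⊕ Unit) → ℚ) :=
  closure {p | ∃ x ∈ P, ∃ l : ℚ, 0 < l ∧ p = Sum.elim (l • x) (fun _ => l)}


/-! ### Auxiliary machinery: Fourier–Motzkin elimination -/

section Aux
variable [Fintype ι]

lemma dotp_add_right' (w x y : ι → ℚ) : dotp w (x + y) = dotp w x + dotp w y := by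
  simp [dotp, mul_add, Finset.sum_add_distrib]

lemma dotp_add_left' (v w x : ι → ℚ) : dotp (v + w) x = dotp v x + dotp w x := by
  simp [dotp, add_mul, Finset.sum_add_distrib]

lemma dotp_smul_left' (r : ℚ) (w x : ι → ℚ) : dotp (r • w) x = r * dotp w x := by
  simp [dotp, Finset.mul_sum, mul_assoc]

lemma dotp_smul_right' (r : ℚ) (w x : ι → ℚ) : dotp w (r • x) = r * dotp w x := by
  simp [dotp, Finset.mul_sum]; apply Finset.sum_congr rfl; intros; ring

lemma dotp_zero_left' (x : ι → ℚ) : dotp 0 x = 0 := by simp [dotp]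

/-- The solution set of the system `A x ≥ b`. -/
def sys {κ : Type*} (A : κ → ι → ℚ) (b : κ → ℚ) : Set (ι → ℚ) := {x | ∀ i, b i ≤ dotp (A i) x}

lemma recCone_sys {κ : Type*} (A : κ → ι → ℚ) (b : κ → ℚ) (hne : (sys A b).Nonempty) :
    recCone (sys A b) = sys A 0 := by
  ext u
  constructor
  · intro hu
    obtain ⟨x0, hx0⟩ := hne
    have key : ∀ k : ℕ, x0 + (k : ℚ) • u ∈ sys A b := by
      intro k
      induction k with
      | zero => simpa using hx0
      | succ k ih =>
        have h2 := hu _ ih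
        have : x0 + ((k : ℚ) + 1) • u = (x0 + (k : ℚ) • u) + u := by
          rw [add_smul, one_smul, add_assoc]
        rw [Nat.cast_succ, this]
        exact h2
    intro i
    simp only [Pi.zero_apply]
    by_contra h
    push_neg at h
    obtain ⟨k, hk⟩ := exists_nat_gt ((dotp (A i) x0 - b i) / (-(dotp (A i) u)))
    have h1 := key k i
    rw [dotp_add_right', dotp_smul_right'] at h1
    rw [div_lt_iff₀ (by linarith)] at hk
    nlinarith
  · intro hu x hx i
    have := hu i
    simp only [Pi.zero_apply] at this
    rw [dotp_add_right']
    linarith [hx i]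

lemma FM {κ : Type*} [Fintype κ] (a : κ → ι → ℚ) (c : κ → ℚ) :
    ∃ (A' : (κ ⊕ κ × κ) → ι → ℚ) (B : (κ → ℚ) → (κ ⊕ κ × κ) → ℚ), B 0 = 0 ∧
    ∀ (b : κ → ℚ) (y : ι → ℚ),
      (∃ t, ∀ i, b i ≤ dotp (a i) y + c i * t) ↔ y ∈ sys A' (B b) := by
  refine ⟨Sum.elim (fun i => if c i = 0 then a i else 0)
      (fun p => if 0 < c p.1 ∧ c p.2 < 0 then (-(c p.2)) • a p.1 + (c p.1) • a p.2 else 0),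
    fun b => Sum.elim (fun i => if c i = 0 then b i else 0)
      (fun p => if 0 < c p.1 ∧ c p.2 < 0 then (-(c p.2)) * b p.1 + (c p.1) * b p.2 else 0),
    ?_, ?_⟩
  · funext k
    cases k with
    | inl i => simp
    | inr p => simp
  · intro b y
    constructor
    · rintro ⟨t, ht⟩ k
      cases k with
      | inl i =>
        simp only [Sum.elim_inl]
        split_ifs with h
        · have := ht i; rw [h] at this; linarith
        · simp [dotp_zero_left']
      | inr p =>
        obtain ⟨i, j⟩ := p
        simp only [Sum.elim_inr]
        split_ifs with h
        · obtain ⟨hi, hj⟩ := h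
          have h1 := ht i
          have h2 := ht j
          rw [dotp_add_left', dotp_smul_left', dotp_smul_left']
          nlinarith
        · simp [dotp_zero_left']
    · intro hy
      set Pos : Finset κ := Finset.univ.filter (fun i => 0 < c i) with hPos
      set Neg : Finset κ := Finset.univ.filter (fun i => c i < 0) with hNeg
      have hzero : ∀ i, c i = 0 → b i ≤ dotp (a i) y := by
        intro i hci
        have := hy (Sum.inl i)
        simp only [Sum.elim_inl, hci, if_true] at this
        simpa using this
      have hpair : ∀ i j, 0 < c i → c j < 0 →
          (-(c j)) * b i + (c i) * b j ≤ (-(c j)) * dotp (a i) y + (c i) * dotp (a j) y := by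
        intro i j hi hj
        have := hy (Sum.inr (i, j))
        simp only [Sum.elim_inr, if_pos (And.intro hi hj)] at this
        rwa [dotp_add_left', dotp_smul_left', dotp_smul_left'] at this
      rcases Pos.eq_empty_or_nonempty with hP | hP
      · rcases Neg.eq_empty_or_nonempty with hN | hN
        · refine ⟨0, fun i => ?_⟩
          have hci : c i = 0 := by
            by_contra hc
            rcases lt_or_gt_of_ne hc with h | h
            · have hmem : i ∈ Neg := Finset.mem_filter.mpr ⟨Finset.mem_univ i, h⟩
              rw [hN] at hmem; exact absurd hmem (Finset.notMem_empty i)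
            · have hmem : i ∈ Pos := Finset.mem_filter.mpr ⟨Finset.mem_univ i, h⟩
              rw [hP] at hmem; exact absurd hmem (Finset.notMem_empty i)
          rw [hci]
          simpa using hzero i hci
        · obtain ⟨j1, hj1mem, hj1⟩ := Finset.exists_min_image Neg
            (fun j => (b j - dotp (a j) y) / c j) hN
          have hcj1 : c j1 < 0 := (Finset.mem_filter.mp hj1mem).2
          refine ⟨(b j1 - dotp (a j1) y) / c j1, fun i => ?_⟩
          rcases lt_trichotomy (c i) 0 with hci | hci | hci
          · have hle := hj1 i (Finset.mem_filter.mpr ⟨Finset.mem_univ i, hci⟩)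
            have : c i * ((b j1 - dotp (a j1) y) / c j1) ≥ c i * ((b i - dotp (a i) y) / c i) := by
              apply mul_le_mul_of_nonpos_left hle (le_of_lt hci)
            rw [mul_div_cancel₀ _ (ne_of_lt hci)] at this
            linarith
          · rw [hci]; simpa using hzero i hci
          · have hmem : i ∈ Pos := Finset.mem_filter.mpr ⟨Finset.mem_univ i, hci⟩
            rw [hP] at hmem; exact absurd hmem (Finset.notMem_empty i)
      · obtain ⟨i0, hi0mem, hi0⟩ := Finset.exists_max_image Pos
          (fun i => (b i - dotp (a i) y) / c i) hP
        have hci0 : 0 < c i0 := (Finset.mem_filter.mp hi0mem).2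
        set t := (b i0 - dotp (a i0) y) / c i0 with htdef
        have hct : c i0 * t = b i0 - dotp (a i0) y := mul_div_cancel₀ _ (ne_of_gt hci0)
        refine ⟨t, fun i => ?_⟩
        rcases lt_trichotomy (c i) 0 with hci | hci | hci
        · have hp := hpair i0 i hci0 hci
          have h2 : c i0 * (b i ) ≤ c i0 * (dotp (a i) y + c i * t) := by nlinarith
          exact le_of_mul_le_mul_left h2 hci0
        · rw [hci]; simpa using hzero i hci
        · have hle := hi0 i (Finset.mem_filter.mpr ⟨Finset.mem_univ i, hci⟩)
          have : c i * ((b i - dotp (a i) y) / c i) ≤ c i * t :=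
            mul_le_mul_of_nonneg_left hle (le_of_lt hci)
          rw [mul_div_cancel₀ _ (ne_of_gt hci)] at this
          linarith

lemma dotp_sum {σ : Type*} [Fintype σ] (v z : (ι ⊕ σ) → ℚ) :
    dotp v z = dotp (v ∘ Sum.inl) (z ∘ Sum.inl) + ∑ s, v (Sum.inr s) * z (Sum.inr s) := by
  simp only [dotp, Fintype.sum_sum_type, Function.comp_apply]

lemma dotp_comp_equiv {α β : Type*} [Fintype α] [Fintype β] (e : α ≃ β) (v z : β → ℚ) :
    dotp (v ∘ e) (z ∘ e) = dotp v z := by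
  simp only [dotp]
  exact Equiv.sum_comp e (fun b => v b * z b)

end Aux

lemma image_restrict_fin1 {μ : Type*} [Fintype μ] {κ : Type*} (A : κ → (μ ⊕ Fin 1) → ℚ)
    (b : κ → ℚ) :
    (fun z : (μ ⊕ Fin 1) → ℚ => z ∘ Sum.inl) '' sys A b =
      {y | ∃ t, ∀ i, b i ≤ dotp (A i ∘ Sum.inl) y + (A i (Sum.inr 0)) * t} := by
  ext y
  constructor
  · rintro ⟨z, hz, rfl⟩
    refine ⟨z (Sum.inr 0), fun i => ?_⟩
    have := hz i
    rw [dotp_sum (A i) z] at this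
    simpa [Fin.sum_univ_one] using this
  · rintro ⟨t, ht⟩
    refine ⟨Sum.elim y (fun _ : Fin 1 => t), fun i => ?_, rfl⟩
    rw [dotp_sum (A i)]
    have : (Sum.elim y (fun _ : Fin 1 => t)) ∘ Sum.inl = y := rfl
    rw [this]
    simpa [Fin.sum_univ_one] using ht i

lemma elim_vars {ν : Type} [Fintype ν] : ∀ (n : ℕ) (κ : Type) [Fintype κ]
    (A : κ → (ν ⊕ Fin n) → ℚ),
    ∃ (κ' : Type) (_ : Fintype κ') (A' : κ' → ν → ℚ) (B : (κ → ℚ) → κ' → ℚ), B 0 = 0 ∧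
    ∀ b, (fun z : (ν ⊕ Fin n) → ℚ => z ∘ Sum.inl) '' sys A b = sys A' (B b) := by
  intro n
  induction n with
  | zero =>
    intro κ _ A
    refine ⟨κ, inferInstance, fun i => A i ∘ Sum.inl, id, rfl, fun b => ?_⟩
    ext y
    constructor
    · rintro ⟨z, hz, rfl⟩
      intro i
      have := hz i
      rw [dotp_sum (A i) z] at this
      simpa using this
    · intro hy
      refine ⟨Sum.elim y (fun s => Fin.elim0 s), fun i => ?_, rfl⟩
      rw [dotp_sum (A i)]
      have h0 : (Sum.elim y (fun s : Fin 0 => Fin.elim0 s)) ∘ Sum.inl = y := rfl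
      rw [h0]
      simpa using hy i
  | succ n ih =>
    intro κ _ A
    let e : (ν ⊕ Fin n) ⊕ Fin 1 ≃ ν ⊕ Fin (n + 1) :=
      (Equiv.sumAssoc ν (Fin n) (Fin 1)).trans
        (Equiv.sumCongr (Equiv.refl ν) finSumFinEquiv)
    let A2 : κ → ((ν ⊕ Fin n) ⊕ Fin 1) → ℚ := fun i => A i ∘ e
    obtain ⟨A₁, B₁, hB₁0, hB₁⟩ := FM (fun i => A2 i ∘ Sum.inl) (fun i => A2 i (Sum.inr 0))
    obtain ⟨κ', instκ', A', B₂, hB₂0, hB₂⟩ := ih _ A₁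
    refine ⟨κ', instκ', A', B₂ ∘ B₁, by simp [hB₁0, hB₂0], fun b => ?_⟩
    have hreindex : (fun z : (ν ⊕ Fin (n+1)) → ℚ => z ∘ e) '' sys A b = sys A2 b := by
      ext w
      constructor
      · rintro ⟨z, hz, rfl⟩
        intro i
        show b i ≤ dotp (A i ∘ e) (z ∘ e)
        rw [dotp_comp_equiv e (A i) z]
        exact hz i
      · intro hw
        refine ⟨w ∘ e.symm, fun i => ?_, by funext x; simp⟩
        have h1 : b i ≤ dotp (A i ∘ e) w := hw i
        rw [← dotp_comp_equiv e (A i) (w ∘ e.symm)]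
        have h2 : (w ∘ e.symm) ∘ e = w := by funext x; simp
        rw [h2]
        exact h1
    have hmaps : (fun z : (ν ⊕ Fin (n+1)) → ℚ => z ∘ Sum.inl) =
        (fun w : (ν ⊕ Fin n) → ℚ => w ∘ Sum.inl) ∘
        (fun w : ((ν ⊕ Fin n) ⊕ Fin 1) → ℚ => w ∘ Sum.inl) ∘
        (fun z : (ν ⊕ Fin (n+1)) → ℚ => z ∘ e) := by
      funext z; funext a; rfl
    rw [hmaps, Set.image_comp, Set.image_comp, hreindex, image_restrict_fin1]
    have hmid : {y | ∃ t, ∀ i, b i ≤ dotp (A2 i ∘ Sum.inl) y + (A2 i (Sum.inr 0)) * t} =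
        sys A₁ (B₁ b) := by
      ext y; exact hB₁ b y
    rw [hmid, hB₂]
    rfl

section graph
variable (n d : ℕ) (r : ℕ) (A : Fin r → Fin n → ℚ) (π : (Fin n → ℚ) →ₗ[ℚ] (Fin d → ℚ))

/-- A row expressing the `j`-th coordinate of `y - π x` over `Fin d ⊕ Fin n`. -/
def rowW (j : Fin d) : (Fin d ⊕ Fin n) → ℚ :=
  Sum.elim (fun j' => if j = j' then 1 else 0) (fun i => -(π (fun j' => if i = j' then 1 else 0) j))

/-- The system cutting out the graph `{(π x, x) | A x ≥ b}`. -/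
def bigA : (Fin r ⊕ (Fin d ⊕ Fin d)) → (Fin d ⊕ Fin n) → ℚ :=
  Sum.elim (fun i => Sum.elim 0 (A i))
    (Sum.elim (fun j => rowW n d π j) (fun j => -(rowW n d π j)))

lemma dotp_rowW (j : Fin d) (z : (Fin d ⊕ Fin n) → ℚ) :
    dotp (rowW n d π j) z = z (Sum.inl j) - π (z ∘ Sum.inr) j := by
  rw [dotp_sum]
  have h1 : dotp (rowW n d π j ∘ Sum.inl) (z ∘ Sum.inl) = z (Sum.inl j) := by
    simp [dotp, rowW, ite_mul, Function.comp]
  have h2 : π (z ∘ Sum.inr) j = ∑ i, π (fun j' => if i = j' then 1 else 0) j * z (Sum.inr i) := by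
    rw [LinearMap.pi_apply_eq_sum_univ π (z ∘ Sum.inr)]
    simp [Finset.sum_apply, mul_comm]
  rw [h1, h2]
  simp [rowW, neg_mul, Finset.sum_neg_distrib, sub_eq_add_neg]

lemma dotp_row0 (i : Fin r) (z : (Fin d ⊕ Fin n) → ℚ) :
    dotp (Sum.elim (0 : Fin d → ℚ) (A i)) z = dotp (A i) (z ∘ Sum.inr) := by
  rw [dotp_sum]
  simp [dotp, Function.comp]

lemma mem_bigA (b : Fin r → ℚ) (z : (Fin d ⊕ Fin n) → ℚ) :
    z ∈ sys (bigA n d r A π) (Sum.elim b 0) ↔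
      (z ∘ Sum.inr ∈ sys A b ∧ z ∘ Sum.inl = π (z ∘ Sum.inr)) := by
  constructor
  · intro hz
    constructor
    · intro i
      have := hz (Sum.inl i)
      rwa [show bigA n d r A π (Sum.inl i) = Sum.elim (0 : Fin d → ℚ) (A i) from rfl,
        dotp_row0] at this
    · funext j
      have h1 := hz (Sum.inr (Sum.inl j))
      have h2 := hz (Sum.inr (Sum.inr j))
      rw [show bigA n d r A π (Sum.inr (Sum.inl j)) = rowW n d π j from rfl, dotp_rowW] at h1
      rw [show bigA n d r A π (Sum.inr (Sum.inr j)) = -(rowW n d π j) from rfl] at h2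
      rw [show dotp (-(rowW n d π j)) z = -dotp (rowW n d π j) z from by simp [dotp],
        dotp_rowW] at h2
      simp only [Sum.elim_inr, Pi.zero_apply] at h1 h2
      have : z (Sum.inl j) = π (z ∘ Sum.inr) j := by linarith
      exact this
  · rintro ⟨h1, h2⟩ k
    cases k with
    | inl i =>
      rw [show bigA n d r A π (Sum.inl i) = Sum.elim (0 : Fin d → ℚ) (A i) from rfl, dotp_row0]
      exact h1 i
    | inr jj =>
      cases jj with
      | inl j =>
        rw [show bigA n d r A π (Sum.inr (Sum.inl j)) = rowW n d π j from rfl, dotp_rowW]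
        have : z (Sum.inl j) = π (z ∘ Sum.inr) j := congrFun h2 j
        simp [this]
      | inr j =>
        rw [show bigA n d r A π (Sum.inr (Sum.inr j)) = -(rowW n d π j) from rfl,
          show dotp (-(rowW n d π j)) z = -dotp (rowW n d π j) z from by simp [dotp], dotp_rowW]
        have : z (Sum.inl j) = π (z ∘ Sum.inr) j := congrFun h2 j
        simp [this]

lemma image_bigA (b : Fin r → ℚ) :
    (fun z : (Fin d ⊕ Fin n) → ℚ => z ∘ Sum.inl) '' sys (bigA n d r A π) (Sum.elim b 0) =
      (⇑π) '' sys A b := by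
  ext y
  constructor
  · rintro ⟨z, hz, rfl⟩
    rw [mem_bigA] at hz
    exact ⟨z ∘ Sum.inr, hz.1, hz.2.symm⟩
  · rintro ⟨x, hx, rfl⟩
    refine ⟨Sum.elim (π x) x, ?_, rfl⟩
    rw [mem_bigA]
    exact ⟨hx, rfl⟩
end graph

/-- for a surjective linear map `π` and a nonempty polyhedron `P`,
`π(rec P) = rec(π P)`. -/
theorem image_recCone (n d : ℕ) (P : Set (Fin n → ℚ)) (hP : IsPolyhedron P)
    (hne : P.Nonempty) (π : (Fin n → ℚ) →ₗ[ℚ] (Fin d → ℚ))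
    (hsurj : Function.Surjective π) :
    (⇑π) '' recCone P = recCone ((⇑π) '' P) := by
  obtain ⟨r, A, b, hPeq⟩ := hP
  have hPeq' : P = sys A b := hPeq
  obtain ⟨κ', instκ', A', B, hB0, hB⟩ := elim_vars (ν := Fin d) n _ (bigA n d r A π)
  haveI := instκ'
  have h1 : (⇑π) '' P = sys A' (B (Sum.elim b 0)) := by
    rw [hPeq', ← image_bigA n d r A π b, hB]
  have hrec : recCone P = sys A 0 := by
    rw [hPeq']
    exact recCone_sys A b (hPeq' ▸ hne)
  have h0 : (Sum.elim (0 : Fin r → ℚ) 0) = (0 : (Fin r ⊕ (Fin d ⊕ Fin d)) → ℚ) := by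
    funext k; cases k <;> rfl
  have h2 : (⇑π) '' recCone P = sys A' 0 := by
    rw [hrec, ← image_bigA n d r A π 0, h0, hB, hB0]
  rw [h2, h1]
  exact (recCone_sys A' (B (Sum.elim b 0)) (h1 ▸ hne.image ⇑π)).symm
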